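/- Let G = (I* ∪ K, E) be a split graph with K a clique and I* a maximum independent set, and 𝓡 = {G_v : v ∈ I* ∪ K} a family of graphs. Then γ_gr(G ↩ 𝓡) = max{ Σ_{v∈I*} γ_gr(G_v) + n(G), max_{v∈K} ( γ_gr(G_v) + Σ_{w∈I*\N(v)} γ_gr(G_w) ) }, where n(G) = 1 if there exist v, w ∈ K with N(v) ∩ N(w) ∩ I* = ∅ and n(G) = 0 otherwise. -/

import Mathlib

namespace GrundyDom

/-- Closed neighborhood N[v]. -/
def cn {V : Type*} (G : SimpleGraph V) (v : V) : Set V := insert v (G.neighborSet v)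

/-- Union of closed neighborhoods of the vertices of a list. -/
def cnUnion {V : Type*} (G : SimpleGraph V) (L : List V) : Set V := ⋃ v ∈ L, cn G v

/-- Private neighborhood of `v` with respect to the first `i` entries of `S`:
`N[v] \ (N[v_1] ∪ ... ∪ N[v_i])`. -/
def PN {V : Type*} (G : SimpleGraph V) (S : List V) (i : ℕ) (v : V) : Set V :=
  cn G v \ cnUnion G (S.take i)

/-- A legal dominating sequence: distinct vertices, dominating set, and every
vertex of the sequence has a nonempty private neighborhood w.r.t. its predecessors. -/
structure IsLegal {V : Type*} (G : SimpleGraph V) (S : List V) : Prop where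
  nodup : S.Nodup
  dominates : ∀ v : V, ∃ u ∈ S, v ∈ cn G u
  legal : ∀ i : Fin S.length, (PN G S i.val (S.get i)).Nonempty

/-- The set `I_S` of vertices that footprint themselves in `S`. -/
def selfFoot {V : Type*} (G : SimpleGraph V) (S : List V) : Set V :=
  {v | ∃ i : Fin S.length, S.get i = v ∧ v ∈ PN G S i.val v}

/-- Grundy domination number: maximum length of a legal dominating sequence. -/
noncomputable def gammaGr {V : Type*} (G : SimpleGraph V) : ℕ :=
  sSup {k | ∃ S : List V, IsLegal G S ∧ S.length = k}

/-- `γ_gr(G, I)`: maximum length of a legal dominating sequence `S` with `I_S = I`. -/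
noncomputable def gammaGrOn {V : Type*} (G : SimpleGraph V) (I : Set V) : ℕ :=
  sSup {k | ∃ S : List V, IsLegal G S ∧ selfFoot G S = I ∧ S.length = k}

/-- `γ_gr^u(G)`: maximum of `γ_gr(G, I)` over independent sets `I` containing `u`. -/
noncomputable def gammaGrVert {V : Type*} (G : SimpleGraph V) (u : V) : ℕ :=
  sSup {k | ∃ I : Set V, (∀ ⦃a⦄, a ∈ I → ∀ ⦃b⦄, b ∈ I → a ≠ b → ¬ G.Adj a b) ∧
    u ∈ I ∧ k = gammaGrOn G I}

/-- Independent set of a graph. -/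
def IsIndep {V : Type*} (G : SimpleGraph V) (I : Set V) : Prop :=
  ∀ ⦃u⦄, u ∈ I → ∀ ⦃v⦄, v ∈ I → u ≠ v → ¬ G.Adj u v

/-- The X-join product `G ↩ 𝓡`: replace each vertex `v` of `G` by the graph `R v`. -/
def XJoin {V : Type*} (G : SimpleGraph V) {W : V → Type*} (R : ∀ v, SimpleGraph (W v)) :
    SimpleGraph (Σ v, W v) where
  Adj x y := G.Adj x.1 y.1 ∨ ∃ h : x.1 = y.1, (R y.1).Adj (h ▸ x.2) y.2
  symm := by
    refine ⟨?_⟩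
    rintro ⟨a, xa⟩ ⟨b, yb⟩ (h | ⟨h, hadj⟩)
    · exact Or.inl h.symm
    · dsimp at h hadj
      subst h
      exact Or.inr ⟨rfl, hadj.symm⟩
  loopless := by
    refine ⟨?_⟩
    rintro ⟨a, xa⟩ (h | ⟨h, hadj⟩)
    · exact h.ne rfl
    · exact hadj.ne rfl

/-- The lexicographic product `G ∘ H`. -/
def Lex {V W : Type*} (G : SimpleGraph V) (H : SimpleGraph W) : SimpleGraph (V × W) where
  Adj x y := G.Adj x.1 y.1 ∨ (x.1 = y.1 ∧ H.Adj x.2 y.2)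
  symm := by
    refine ⟨?_⟩
    rintro x y (h | ⟨h1, h2⟩)
    · exact Or.inl h.symm
    · exact Or.inr ⟨h1.symm, h2.symm⟩
  loopless := by
    refine ⟨?_⟩
    rintro x (h | ⟨_, h⟩)
    · exact h.ne rfl
    · exact h.ne rfl

/-- The replacement graph `G_{u ↩ H}`: replace the vertex `u` of `G` by `H`. -/
def Replace {V : Type*} (G : SimpleGraph V) (u : V) {W : Type*} (H : SimpleGraph W) :
    SimpleGraph ({v : V // v ≠ u} ⊕ W) where
  Adj x y :=
    match x, y with
    | Sum.inl a, Sum.inl b => G.Adj a.1 b.1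
    | Sum.inl a, Sum.inr _ => G.Adj a.1 u
    | Sum.inr _, Sum.inl b => G.Adj u b.1
    | Sum.inr h1, Sum.inr h2 => H.Adj h1 h2
  symm := by refine ⟨?_⟩; rintro (a|a) (b|b) h <;> exact h.symm
  loopless := by refine ⟨?_⟩; rintro (a|a) h <;> exact h.ne rfl

/-- `C_n^m`: the m-th power of the n-cycle, on vertex set `ZMod n`;
two vertices are adjacent iff their circular distance is between 1 and m. -/
def cyclePow (n m : ℕ) : SimpleGraph (ZMod n) where
  Adj i j := i ≠ j ∧ ∃ k : ℕ, 1 ≤ k ∧ k ≤ m ∧ (j = i + k ∨ i = j + k)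
  symm := by
    refine ⟨?_⟩
    rintro i j ⟨hne, k, h1, h2, h3⟩
    exact ⟨hne.symm, k, h1, h2, h3.symm⟩
  loopless := ⟨fun i h => h.1 rfl⟩

/-- `P_n^m`: the m-th power of the n-path, on vertex set `Fin n`
(vertex `i` represents the `(i+1)`-st vertex of the path);
two vertices adjacent iff their distance is between 1 and m. -/
def pathPow (n m : ℕ) : SimpleGraph (Fin n) where
  Adj i j := i ≠ j ∧ Nat.dist i.val j.val ≤ m
  symm := by
    refine ⟨?_⟩
    rintro i j ⟨hne, hd⟩
    exact ⟨hne.symm, by rwa [Nat.dist_comm]⟩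
  loopless := ⟨fun i h => h.1 rfl⟩

end GrundyDom

open GrundyDom Finset

/-!
Lower bound: the layers of an independent set of `G` do not interact, so each of them can be
played by a Grundy dominating sequence of its factor; the independent sets `I*` and
`{v} ∪ (I* \ N(v))` give the sum over `I*` and the term of `v ∈ K`.

Upper bound: choose a footprint for every vertex of a legal sequence. The plays footprinting a
layer `a`, preceded by at most one play inside `a`, trace a legal sequence of `G_a`. Charge a play
to its layer if that lies in `I*`, else to the layer it footprints, and let `t₀` be the first play
in a layer `a ∈ K`. After `t₀` only layer `a` and the layers of `I* \ N(a)` can be footprinted, so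
each `x ∈ I* \ N(a)` pays for its charges with `G_x`. The remaining plays either all fit into
`G_a`, or a layer of `I* ∩ N(a)` was played before `t₀`; then they are `t₀` and earlier plays in
`I* ∩ N(a)`, and these layers absorb `t₀` as well unless `n(G) = 1`.
-/

namespace GrundyDom

lemma card_le_sum_of_card_fiber_le {ι V : Type*} [DecidableEq V] {A : Finset ι} {X : Finset V}
    {c : ι → V} {g : V → ℕ} (hc : ∀ i ∈ A, c i ∈ X) (hg : ∀ x ∈ X, #{i ∈ A | c i = x} ≤ g x) :
    #A ≤ ∑ x ∈ X, g x :=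
  (card_eq_sum_card_fiberwise hc).trans_le (sum_le_sum hg)

lemma IsIndep.mono {V : Type*} {G : SimpleGraph V} {I J : Set V} (hI : IsIndep G I)
    (hJ : J ⊆ I) : IsIndep G J :=
  fun _ hu _ hv => hI (hJ hu) (hJ hv)

section Legal

variable {α : Type*} {H : SimpleGraph α}

lemma mem_cn {x y : α} : y ∈ cn H x ↔ y = x ∨ H.Adj x y := by
  simp [cn]

lemma self_mem_cn (x : α) : x ∈ cn H x := by simp [mem_cn]

@[simp] lemma cnUnion_nil : cnUnion H [] = ∅ := by simp [cnUnion]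

@[simp] lemma cnUnion_cons (v : α) (L : List α) :
    cnUnion H (v :: L) = cn H v ∪ cnUnion H L := by
  simp [cnUnion, Set.iUnion_or, Set.iUnion_union_distrib]

lemma mem_cnUnion {L : List α} {y : α} : y ∈ cnUnion H L ↔ ∃ x ∈ L, y ∈ cn H x := by
  simp [cnUnion]

lemma mem_cnUnion_take {S : List α} {i : ℕ} {y : α} :
    y ∈ cnUnion H (S.take i) ↔ ∃ j : Fin S.length, j.val < i ∧ y ∈ cn H (S.get j) := by
  simp only [mem_cnUnion, List.mem_take_iff_getElem, List.get_eq_getElem]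
  constructor
  · rintro ⟨_, ⟨j, hj, rfl⟩, hy⟩
    exact ⟨⟨j, (lt_min_iff.mp hj).2⟩, (lt_min_iff.mp hj).1, hy⟩
  · rintro ⟨j, hji, hy⟩
    exact ⟨_, ⟨j, lt_min_iff.mpr ⟨hji, j.2⟩, rfl⟩, hy⟩

/-- With `D = ∅`, legality of a sequence without the domination requirement. -/
def IsLegalFrom (H : SimpleGraph α) (D : Set α) : List α → Prop
  | [] => True
  | v :: S => (cn H v \ D).Nonempty ∧ IsLegalFrom H (D ∪ cn H v) S

@[simp] lemma isLegalFrom_nil (D : Set α) : IsLegalFrom H D [] := trivial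

lemma isLegalFrom_append {D : Set α} {L M : List α} :
    IsLegalFrom H D (L ++ M) ↔ IsLegalFrom H D L ∧ IsLegalFrom H (D ∪ cnUnion H L) M := by
  induction L generalizing D with
  | nil => simp
  | cons v L ih => simp [IsLegalFrom, ih, Set.union_assoc, and_assoc]

lemma isLegalFrom_singleton {D : Set α} {v : α} :
    IsLegalFrom H D [v] ↔ (cn H v \ D).Nonempty := by
  simp [IsLegalFrom]

lemma isLegalFrom_iff_get {D : Set α} {S : List α} :
    IsLegalFrom H D S ↔
      ∀ i : Fin S.length, (cn H (S.get i) \ (D ∪ cnUnion H (S.take i))).Nonempty := by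
  induction S generalizing D with
  | nil => simp
  | cons v S ih => simp [IsLegalFrom, ih, Fin.forall_fin_succ, Set.union_assoc]

lemma IsLegalFrom.not_subset {D : Set α} {S : List α} (hS : IsLegalFrom H D S) {v : α}
    (hv : v ∈ S) : ¬ cn H v ⊆ D := by
  induction S generalizing D with
  | nil => simp at hv
  | cons u S ih =>
    rcases List.mem_cons.mp hv with rfl | hv
    · exact fun h => Set.not_nonempty_empty (Set.sdiff_eq_empty.mpr h ▸ hS.1)
    · exact fun h => ih hS.2 hv (h.trans Set.subset_union_left)

lemma IsLegalFrom.nodup {D : Set α} {S : List α} (hS : IsLegalFrom H D S) : S.Nodup := by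
  induction S generalizing D with
  | nil => simp
  | cons v S ih =>
    exact List.nodup_cons.mpr ⟨fun hv => hS.2.not_subset hv Set.subset_union_right, ih hS.2⟩

lemma IsLegal.isLegalFrom {S : List α} (hS : IsLegal H S) : IsLegalFrom H ∅ S :=
  isLegalFrom_iff_get.mpr fun i => by simpa [PN] using hS.legal i

lemma IsLegalFrom.isLegal {S : List α} (hS : IsLegalFrom H ∅ S)
    (hdom : ∀ v, ∃ u ∈ S, v ∈ cn H u) : IsLegal H S :=
  ⟨hS.nodup, hdom, fun i => by simpa [PN] using isLegalFrom_iff_get.mp hS i⟩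

variable [Fintype α]

lemma IsLegalFrom.exists_isLegal {S : List α} (hS : IsLegalFrom H ∅ S) :
    ∃ T, IsLegal H T ∧ S.length ≤ T.length := by
  by_cases hdom : ∀ v, ∃ u ∈ S, v ∈ cn H u
  · exact ⟨S, hS.isLegal hdom, le_rfl⟩
  push Not at hdom
  obtain ⟨v, hv⟩ := hdom
  have hSv : IsLegalFrom H ∅ (S ++ [v]) :=
    isLegalFrom_append.mpr ⟨hS, isLegalFrom_singleton.mpr
      ⟨v, self_mem_cn v, by simpa [mem_cnUnion] using hv⟩⟩
  have : Fintype.card α - (S ++ [v]).length < Fintype.card α - S.length := by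
    have := hSv.nodup.length_le_card
    simp only [List.length_append, List.length_singleton] at this ⊢
    omega
  obtain ⟨T, hT, hlen⟩ := hSv.exists_isLegal
  exact ⟨T, hT, by simp only [List.length_append, List.length_singleton] at hlen; omega⟩
termination_by Fintype.card α - S.length

lemma bddAbove_lengths_isLegal : BddAbove {k | ∃ S : List α, IsLegal H S ∧ S.length = k} :=
  ⟨Fintype.card α, by rintro _ ⟨S, hS, rfl⟩; exact hS.nodup.length_le_card⟩

lemma IsLegalFrom.length_le_gammaGr {S : List α} (hS : IsLegalFrom H ∅ S) :
    S.length ≤ gammaGr H := by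
  obtain ⟨T, hT, hlen⟩ := hS.exists_isLegal
  exact hlen.trans (le_csSup bddAbove_lengths_isLegal ⟨T, hT, rfl⟩)

lemma exists_isLegal_length_eq_gammaGr : ∃ S : List α, IsLegal H S ∧ S.length = gammaGr H := by
  obtain ⟨T, hT, -⟩ := (isLegalFrom_nil (H := H) ∅).exists_isLegal
  exact Nat.sSup_mem (s := {k | ∃ S : List α, IsLegal H S ∧ S.length = k}) ⟨T.length, T, hT, rfl⟩
    bddAbove_lengths_isLegal

lemma gammaGr_le {m : ℕ} (h : ∀ S : List α, IsLegal H S → S.length ≤ m) : gammaGr H ≤ m := by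
  obtain ⟨T, hT, -⟩ := (isLegalFrom_nil (H := H) ∅).exists_isLegal
  refine csSup_le ⟨T.length, T, hT, rfl⟩ ?_
  rintro _ ⟨S, hS, rfl⟩
  exact h S hS

lemma one_le_gammaGr [Nonempty α] : 1 ≤ gammaGr H :=
  (isLegalFrom_singleton.mpr ⟨Classical.arbitrary α, self_mem_cn _, id⟩ :
    IsLegalFrom H ∅ [Classical.arbitrary α]).length_le_gammaGr

end Legal

section Footprint

variable {α ι : Type*} {H : SimpleGraph α}

structure IsFootprint [LT ι] (H : SimpleGraph α) (f w : ι → α) : Prop where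
  mem_cn : ∀ i, w i ∈ cn H (f i)
  not_mem_cn : ∀ ⦃i j⦄, j < i → w i ∉ cn H (f j)

lemma IsLegal.exists_isFootprint {S : List α} (hS : IsLegal H S) :
    ∃ w, IsFootprint H S.get w := by
  choose w hw using hS.legal
  exact ⟨w, fun i => (hw i).1, fun i j hji hj => (hw i).2 (mem_cnUnion_take.mpr ⟨j, hji, hj⟩)⟩

lemma IsFootprint.card_le_gammaGr [Fintype α] [Fintype ι] [LinearOrder ι] {f w : ι → α}
    (h : IsFootprint H f w) : Fintype.card ι ≤ gammaGr H := by
  let e := Fintype.orderIsoFinOfCardEq ι rfl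
  have hL : IsLegalFrom H ∅ (List.ofFn (f ∘ e)) := by
    refine isLegalFrom_iff_get.mpr fun i => ⟨w (e ⟨i, by simpa using i.2⟩), ?_, ?_⟩
    · simpa using h.mem_cn _
    · rintro (hmem | hmem)
      · exact hmem
      · obtain ⟨j, hji, hj⟩ := mem_cnUnion_take.mp hmem
        refine h.not_mem_cn (e.strictMono ?_) (by simpa using hj)
        exact Fin.lt_def.mpr (by simpa using hji)
  simpa using hL.length_le_gammaGr

end Footprint

section XJoin

variable {V ι : Type*} {G : SimpleGraph V} {W : V → Type*} {R : ∀ v, SimpleGraph (W v)}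

lemma mk_mem_cn_xJoin_mk {a : V} {x y : W a} :
    (⟨a, y⟩ : Σ v, W v) ∈ cn (XJoin G R) ⟨a, x⟩ ↔ y ∈ cn (R a) x := by
  simp only [mem_cn, XJoin, Sigma.mk.injEq, heq_eq_eq, true_and, G.loopless.irrefl a,
    false_or, exists_const]

lemma mem_cn_xJoin_of_adj {s t : Σ v, W v} (h : G.Adj s.1 t.1) : t ∈ cn (XJoin G R) s :=
  mem_cn.mpr (Or.inr (Or.inl h))

lemma fst_eq_or_adj_of_mem_cn_xJoin {s t : Σ v, W v} (h : t ∈ cn (XJoin G R) s) :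
    t.1 = s.1 ∨ G.Adj s.1 t.1 := by
  rcases mem_cn.mp h with rfl | h | ⟨h, -⟩
  exacts [Or.inl rfl, Or.inr h, Or.inl h.symm]

lemma fst_ne_of_mem_cnUnion_xJoin {B : List (Σ v, W v)} {x : V}
    (hB : ∀ u ∈ B, u.1 ≠ x ∧ ¬ G.Adj u.1 x) {t : Σ v, W v} (ht : t ∈ cnUnion (XJoin G R) B) :
    t.1 ≠ x := by
  obtain ⟨u, hu, htu⟩ := mem_cnUnion.mp ht
  rintro rfl
  rcases fst_eq_or_adj_of_mem_cn_xJoin htu with h | h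
  exacts [(hB u hu).1 h.symm, (hB u hu).2 h]

lemma IsLegalFrom.map_mk {a : V} {D : Set (W a)} {D' : Set (Σ v, W v)} {l : List (W a)}
    (hl : IsLegalFrom (R a) D l) (hD : ∀ y, ⟨a, y⟩ ∈ D' → y ∈ D) :
    IsLegalFrom (XJoin G R) D' (l.map (Sigma.mk a)) := by
  induction l generalizing D D' with
  | nil => trivial
  | cons x l ih =>
    obtain ⟨⟨y, hy, hyD⟩, hl⟩ := hl
    refine ⟨⟨⟨a, y⟩, mk_mem_cn_xJoin_mk.mpr hy, fun h => hyD (hD y h)⟩, ih hl ?_⟩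
    rintro z (hz | hz)
    exacts [Or.inl (hD z hz), Or.inr (mk_mem_cn_xJoin_mk.mp hz)]

lemma exists_isLegalFrom_length_eq_sum [DecidableEq V] [∀ v, Fintype (W v)] {s : Finset V}
    (hs : IsIndep G ↑s) {D : Set (Σ v, W v)} (hD : ∀ t ∈ D, t.1 ∉ s) :
    ∃ B, IsLegalFrom (XJoin G R) D B ∧ (∀ t ∈ B, t.1 ∈ s) ∧
      B.length = ∑ x ∈ s, gammaGr (R x) := by
  induction s using Finset.induction_on with
  | empty => exact ⟨[], trivial, by simp, by simp⟩
  | insert a s ha ih =>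
    obtain ⟨B, hB, hBs, hlen⟩ := ih (hs.mono (by simp))
      (fun t ht hts => hD t ht (mem_insert_of_mem hts))
    obtain ⟨F, hF, hFlen⟩ := exists_isLegal_length_eq_gammaGr (H := R a)
    refine ⟨B ++ F.map (Sigma.mk a), isLegalFrom_append.mpr ⟨hB, hF.isLegalFrom.map_mk ?_⟩,
      ?_, by simp [sum_insert ha, hlen, hFlen, add_comm]⟩
    · rintro y (hy | hy)
      · exact absurd (mem_insert_self a s) (hD _ hy)
      · refine fst_ne_of_mem_cnUnion_xJoin (fun u hu => ?_) hy rfl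
        have hne : u.1 ≠ a := fun h => ha (h ▸ hBs u hu)
        exact ⟨hne, hs (by simp [hBs u hu]) (by simp) hne⟩
    · simp only [List.mem_append, List.mem_map]
      rintro t (ht | ⟨x, -, rfl⟩)
      exacts [mem_insert_of_mem (hBs t ht), mem_insert_self a s]

lemma sum_gammaGr_le_gammaGr_xJoin [Fintype V] [DecidableEq V] [∀ v, Fintype (W v)]
    {s : Finset V} (hs : IsIndep G ↑s) : ∑ x ∈ s, gammaGr (R x) ≤ gammaGr (XJoin G R) := by
  obtain ⟨B, hB, -, hlen⟩ := exists_isLegalFrom_length_eq_sum (R := R) hs (D := ∅) (by simp)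
  exact hlen ▸ hB.length_le_gammaGr

def charge [DecidableEq V] (I : Finset V) (f w : ι → Σ v, W v) (i : ι) : V :=
  if (f i).1 ∈ I then (f i).1 else (w i).1

variable [LinearOrder ι] {f w : ι → Σ v, W v}

lemma IsFootprint.not_adj (h : IsFootprint (XJoin G R) f w) {i j : ι} (hji : j < i) :
    ¬ G.Adj (f j).1 (w i).1 :=
  fun hadj => h.not_mem_cn hji (mem_cn_xJoin_of_adj hadj)

lemma IsFootprint.adj_of_ne (h : IsFootprint (XJoin G R) f w) {i : ι} (hi : (w i).1 ≠ (f i).1) :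
    G.Adj (f i).1 (w i).1 :=
  (fst_eq_or_adj_of_mem_cn_xJoin (h.mem_cn i)).resolve_left hi

lemma IsFootprint.fst_eq_of_lt (h : IsFootprint (XJoin G R) f w) {i j : ι} (hji : j < i)
    (hij : (f j).1 = (f i).1) : (w i).1 = (f i).1 := by
  by_contra hne
  exact h.not_adj hji (hij ▸ h.adj_of_ne hne)

variable [∀ v, Fintype (W v)]

lemma card_le_gammaGr_of_fst_eq [Fintype ι] {a : V} (h : IsFootprint (XJoin G R) f w)
    (hf : ∀ i, (f i).1 = a) (hw : ∀ i, (w i).1 = a) : Fintype.card ι ≤ gammaGr (R a) := by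
  have hmk : ∀ t : Σ v, W v, t.1 = a → ∃ x, (⟨a, x⟩ : Σ v, W v) = t := by
    rintro ⟨b, x⟩ rfl
    exact ⟨x, rfl⟩
  choose f' hf' using fun i => hmk _ (hf i)
  choose w' hw' using fun i => hmk _ (hw i)
  refine IsFootprint.card_le_gammaGr (H := R a) (f := f') (w := w')
    ⟨fun i => ?_, fun i j hji => ?_⟩
  · rw [← mk_mem_cn_xJoin_mk (G := G), hf', hw']
    exact h.mem_cn i
  · rw [← mk_mem_cn_xJoin_mk (G := G), hf', hw']
    exact h.not_mem_cn hji

variable [DecidableEq V]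

/-- Each play of `A` is traced on layer `a` by its footprint, or (for the first one only) by
itself; the traces form a legal sequence of `R a`. -/
lemma IsFootprint.card_le_gammaGr_factor (h : IsFootprint (XJoin G R) f w) (A : Finset ι) (a : V)
    (hA : ∀ i ∈ A, (w i).1 = a ∨ ((f i).1 = a ∧ ∀ j ∈ A, i ≤ j)) :
    #A ≤ gammaGr (R a) := by
  let f' : A → Σ v, W v := fun i => if (f i).1 = a then f i else w i
  let w' : A → Σ v, W v := fun i => if (w i).1 = a then w i else f i
  have hwA : ∀ i j : A, j < i → (w i).1 = a := fun i j hji =>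
    (hA i i.2).resolve_right fun h' => not_lt_of_ge (h'.2 j j.2) hji
  rw [← Fintype.card_coe]
  refine card_le_gammaGr_of_fst_eq (G := G) (f := f') (w := w')
    ⟨fun i => ?_, fun i j hji => ?_⟩ (fun i => ?_) (fun i => ?_)
  · by_cases hw : (w i).1 = a <;> by_cases hf : (f i).1 = a <;>
      simp only [f', w', hw, hf, if_true, if_false]
    exacts [h.mem_cn i, self_mem_cn _, self_mem_cn _,
      absurd ((hA i i.2).resolve_left hw).1 hf]
  · simp only [f', w', if_pos (hwA i j hji)]
    split_ifs with hf
    · exact h.not_mem_cn hji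
    · have hwj : (w j).1 = a := (hA j j.2).resolve_right fun h' => hf h'.1
      refine fun _ => h.not_adj hji ?_
      rw [hwA i j hji, ← hwj]
      exact h.adj_of_ne (by rw [hwj]; exact Ne.symm hf)
  · simp only [f']
    split_ifs with hf
    exacts [hf, (hA i i.2).resolve_right fun h' => hf h'.1]
  · simp only [w']
    split_ifs with hw
    exacts [hw, ((hA i i.2).resolve_left hw).1]

lemma IsFootprint.card_fst_eq_le (h : IsFootprint (XJoin G R) f w) (A : Finset ι) (x : V) :
    #{i ∈ A | (f i).1 = x} ≤ gammaGr (R x) := by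
  refine h.card_le_gammaGr_factor _ x fun i hi => ?_
  by_cases hw : (w i).1 = x
  · exact Or.inl hw
  refine Or.inr ⟨(mem_filter.mp hi).2, fun j hj => not_lt.mp fun hji => hw ?_⟩
  rw [h.fst_eq_of_lt hji ((mem_filter.mp hj).2.trans (mem_filter.mp hi).2.symm)]
  exact (mem_filter.mp hi).2

lemma IsFootprint.card_le_sum_of_forall_mem [Fintype ι] (h : IsFootprint (XJoin G R) f w)
    {I : Finset V} (hI : ∀ i, (f i).1 ∈ I) :
    Fintype.card ι ≤ ∑ x ∈ I, gammaGr (R x) := by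
  rw [← card_univ]
  exact card_le_sum_of_card_fiber_le (c := fun i => (f i).1) (fun i _ => hI i)
    fun x _ => h.card_fst_eq_le univ x

lemma IsFootprint.card_lt_fst_eq_add_one_le [Fintype ι] (h : IsFootprint (XJoin G R) f w)
    {t : ι} {x : V} (hwt : (w t).1 = x) (hft : (f t).1 ≠ x) :
    #{i | i < t ∧ (f i).1 = x} + 1 ≤ gammaGr (R x) := by
  rw [← card_insert_of_notMem (s := {i | i < t ∧ (f i).1 = x}) (a := t) (by simp)]
  refine h.card_le_gammaGr_factor _ x fun i hi => ?_
  by_cases hw : (w i).1 = x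
  · exact Or.inl hw
  obtain rfl | hi := mem_insert.mp hi
  · exact absurd hwt hw
  obtain ⟨hit, hfi⟩ := (mem_filter.mp hi).2
  refine Or.inr ⟨hfi, fun j hj => ?_⟩
  obtain rfl | hj := mem_insert.mp hj
  · exact hit.le
  refine not_lt.mp fun hji => hw ?_
  rw [h.fst_eq_of_lt hji (((mem_filter.mp hj).2.2).trans hfi.symm), hfi]

lemma IsFootprint.card_charge_eq_le (h : IsFootprint (XJoin G R) f w) (I : Finset V)
    (A : Finset ι) (x : V)
    (hx : ∀ i ∈ A, ∀ j ∈ A, j < i → (f i).1 = x → (w j).1 = x → (w i).1 = x) :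
    #{i ∈ A | charge I f w i = x} ≤ gammaGr (R x) := by
  refine h.card_le_gammaGr_factor _ x fun i hi => ?_
  rw [Finset.mem_filter, charge] at hi
  by_cases hw : (w i).1 = x
  · exact Or.inl hw
  have hf : (f i).1 = x := by split_ifs at hi <;> simp_all
  refine Or.inr ⟨hf, fun j hj => not_lt.mp fun hji => hw ?_⟩
  rw [Finset.mem_filter, charge] at hj
  split_ifs at hj
  · exact (h.fst_eq_of_lt hji (hj.2.trans hf.symm)).trans hf
  · exact hx i hi.1 j hj.1 hji hf hj.2

end XJoin

structure IsSplitPartition {V : Type*} (G : SimpleGraph V) (K I : Finset V) : Prop where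
  mem_or_mem : ∀ v, v ∈ K ∨ v ∈ I
  disjoint : Disjoint K I
  isClique : G.IsClique (K : Set V)
  isIndep : IsIndep G (I : Set V)

namespace IsSplitPartition

variable {V : Type*} {G : SimpleGraph V} {K I : Finset V} {u v : V}

lemma not_mem_right (hG : IsSplitPartition G K I) (hv : v ∈ K) : v ∉ I :=
  disjoint_left.mp hG.disjoint hv

lemma eq_of_not_adj (hG : IsSplitPartition G K I) (hu : u ∈ K) (hv : v ∈ K)
    (h : ¬ G.Adj u v) : u = v := by
  by_contra hne
  exact h (hG.isClique hu hv hne)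

lemma not_adj_of_mem_right (hG : IsSplitPartition G K I) (hu : u ∈ I) (hv : v ∈ I) :
    ¬ G.Adj u v :=
  fun h => hG.isIndep hu hv h.ne h

lemma mem_left_of_adj (hG : IsSplitPartition G K I) (hu : u ∈ I) (h : G.Adj u v) : v ∈ K :=
  (hG.mem_or_mem v).resolve_right fun hv => hG.not_adj_of_mem_right hu hv h

section XJoin

variable [Fintype V] [DecidableEq V] [DecidableRel G.Adj] {W : V → Type*}
  [∀ v, Fintype (W v)] {R : ∀ v, SimpleGraph (W v)}

lemma gammaGr_add_sum_le (hG : IsSplitPartition G K I) (hv : v ∈ K) :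
    gammaGr (R v) + ∑ x ∈ I with ¬ G.Adj v x, gammaGr (R x) ≤ gammaGr (XJoin G R) := by
  have hvI : v ∉ {x ∈ I | ¬ G.Adj v x} := fun h => hG.not_mem_right hv (mem_filter.mp h).1
  rw [← sum_insert hvI (f := fun x => gammaGr (R x))]
  refine sum_gammaGr_le_gammaGr_xJoin fun x hx y hy hxy => ?_
  simp only [coe_insert, coe_filter, Set.mem_insert_iff, Set.mem_ofPred_eq] at hx hy
  rcases hx with rfl | ⟨hx, hvx⟩ <;> rcases hy with rfl | ⟨hy, hvy⟩
  exacts [absurd rfl hxy, hvy, fun h => hvx h.symm, hG.not_adj_of_mem_right hx hy]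

/-- If `v, w ∈ K` have no common neighbour in `I`, one more vertex fits in: play the layers of
`I \ N(w)`, then a vertex of layer `v` footprinting layer `w`, then the layers of `I ∩ N(w)`,
which `v` does not see. -/
lemma sum_add_one_le [∀ v, Nonempty (W v)] (hG : IsSplitPartition G K I) {w : V} (hv : v ∈ K)
    (hw : w ∈ K) (hvw : ∀ x ∈ I, ¬(G.Adj v x ∧ G.Adj w x)) :
    ∑ x ∈ I, gammaGr (R x) + 1 ≤ gammaGr (XJoin G R) := by
  obtain ⟨B₁, hB₁, hB₁I, hlen₁⟩ := exists_isLegalFrom_length_eq_sum (R := R) (D := ∅)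
    (hG.isIndep.mono (coe_subset.mpr (filter_subset (¬ G.Adj w ·) I))) (by simp)
  let p : Σ v, W v := ⟨v, Classical.arbitrary _⟩
  obtain ⟨q, hq, hqw⟩ : ∃ q ∈ cn (XJoin G R) p, q.1 = w := by
    by_cases hvw' : v = w
    · exact ⟨p, self_mem_cn p, hvw'⟩
    · exact ⟨⟨w, Classical.arbitrary _⟩, mem_cn_xJoin_of_adj (hG.isClique hv hw hvw'), rfl⟩
  have hp : IsLegalFrom (XJoin G R) (∅ ∪ cnUnion (XJoin G R) B₁) [p] := by
    refine isLegalFrom_singleton.mpr ⟨q, hq, ?_⟩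
    rintro (h | h)
    · exact h
    refine fst_ne_of_mem_cnUnion_xJoin (fun u hu => ⟨fun h' => ?_, fun h' => ?_⟩) h hqw
    · exact hG.not_mem_right hw (h' ▸ (mem_filter.mp (hB₁I u hu)).1)
    · exact (mem_filter.mp (hB₁I u hu)).2 h'.symm
  obtain ⟨B₂, hB₂, -, hlen₂⟩ := exists_isLegalFrom_length_eq_sum (R := R)
    (D := ∅ ∪ cnUnion (XJoin G R) (B₁ ++ [p]))
    (hG.isIndep.mono (coe_subset.mpr (filter_subset (G.Adj w ·) I))) (by
      rintro t (h | h) htx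
      · exact h
      obtain ⟨hxI, hwx⟩ := mem_filter.mp htx
      refine fst_ne_of_mem_cnUnion_xJoin (fun u hu => ?_) h rfl
      rcases List.mem_append.mp hu with hu | hu
      · obtain ⟨huI, hwu⟩ := mem_filter.mp (hB₁I u hu)
        exact ⟨fun h' => hwu (h' ▸ hwx), hG.not_adj_of_mem_right huI hxI⟩
      · obtain rfl := List.mem_singleton.mp hu
        exact ⟨fun h' => hG.not_mem_right hv ((show v = t.1 from h') ▸ hxI),
          fun h' => hvw _ hxI ⟨h', hwx⟩⟩)
  have hS := isLegalFrom_append.mpr ⟨isLegalFrom_append.mpr ⟨hB₁, hp⟩, hB₂⟩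
  have hlen := hS.length_le_gammaGr
  rw [← sum_filter_not_add_sum_filter I (G.Adj w ·)]
  simp only [List.length_append, hlen₁, hlen₂, List.length_singleton] at hlen
  omega

end XJoin

section Upper

variable {ι : Type*} {W : V → Type*} {R : ∀ v, SimpleGraph (W v)} [LinearOrder ι]
  {f w : ι → Σ v, W v}

lemma fst_footprint_eq_of_mem (hG : IsSplitPartition G K I) (h : IsFootprint (XJoin G R) f w)
    {i : ι} (hf : (f i).1 ∈ I) (hw : (w i).1 ∈ I) : (w i).1 = (f i).1 := by
  by_contra hne
  exact hG.not_adj_of_mem_right hf hw (h.adj_of_ne hne)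

lemma fst_mem_of_lt (hG : IsSplitPartition G K I) {t₀ : ι} (ht₀ : IsLeast {i | (f i).1 ∈ K} t₀)
    {i : ι} (hi : i < t₀) : (f i).1 ∈ I :=
  (hG.mem_or_mem _).resolve_left fun hK => not_le_of_gt hi (ht₀.2 hK)

lemma fst_footprint_eq_or_mem_of_lt (hG : IsSplitPartition G K I) (h : IsFootprint (XJoin G R) f w)
    {t₀ : ι} (ht₀ : IsLeast {i | (f i).1 ∈ K} t₀) {i : ι} (hi : t₀ < i) :
    (w i).1 = (f t₀).1 ∨ (w i).1 ∈ I ∧ ¬ G.Adj (f t₀).1 (w i).1 := by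
  rcases hG.mem_or_mem (w i).1 with hK | hI
  · exact Or.inl (hG.eq_of_not_adj ht₀.1 hK (h.not_adj hi)).symm
  · exact Or.inr ⟨hI, h.not_adj hi⟩

variable [DecidableEq V]

lemma charge_eq (hG : IsSplitPartition G K I) (h : IsFootprint (XJoin G R) f w) {i : ι}
    (hw : (w i).1 ∈ I) : charge I f w i = (w i).1 := by
  unfold charge
  split_ifs with hf
  exacts [(hG.fst_footprint_eq_of_mem h hf hw).symm, rfl]

variable [Fintype ι] [DecidableRel G.Adj]

lemma charge_not_mem_subset (hG : IsSplitPartition G K I) (h : IsFootprint (XJoin G R) f w)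
    {t₀ : ι} (ht₀ : IsLeast {i | (f i).1 ∈ K} t₀) {p : ι} (hp : p < t₀)
    (hpa : G.Adj (f t₀).1 (f p).1) :
    ({i | ¬(charge I f w i ∈ I ∧ ¬ G.Adj (f t₀).1 (charge I f w i))} : Finset ι) ⊆
      insert t₀ ({i | i < t₀ ∧ G.Adj (f t₀).1 (f i).1} : Finset ι) := by
  intro i hi
  simp only [mem_filter, mem_univ, true_and, mem_insert] at hi ⊢
  rcases lt_trichotomy i t₀ with hit | rfl | hit
  · have hfi := hG.fst_mem_of_lt ht₀ hit
    simp only [charge, if_pos hfi, not_and, not_not] at hi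
    exact Or.inr ⟨hit, hi hfi⟩
  · exact Or.inl rfl
  · rcases hG.fst_footprint_eq_or_mem_of_lt h ht₀ hit with hwa | hB
    · exact absurd (hwa ▸ hpa.symm) (h.not_adj (hp.trans hit))
    · exact absurd (by rwa [hG.charge_eq h hB.1]) hi

variable [∀ v, Fintype (W v)]

/-- A play in layer `x ∈ I \ N(a)` after `x` was footprinted from a clique layer `c` cannot
footprint a clique layer: it would have to be `c`, and also `a` as it comes after `t₀`. -/
lemma card_charge_mem_le (hG : IsSplitPartition G K I) (h : IsFootprint (XJoin G R) f w)
    {t₀ : ι} (ht₀ : IsLeast {i | (f i).1 ∈ K} t₀) :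
    #{i | charge I f w i ∈ I ∧ ¬ G.Adj (f t₀).1 (charge I f w i)} ≤
      ∑ x ∈ I with ¬ G.Adj (f t₀).1 x, gammaGr (R x) := by
  refine card_le_sum_of_card_fiber_le (c := charge I f w) (fun i hi => by simpa using hi)
    fun x hx => h.card_charge_eq_le I _ x fun i _ j _ hji hfi hwj => ?_
  obtain ⟨hxI, hax⟩ := mem_filter.mp hx
  by_contra hne
  have hwi : G.Adj x (w i).1 := hfi ▸ h.adj_of_ne (hfi ▸ hne)
  have hwK := hG.mem_left_of_adj hxI hwi
  by_cases hfj : (f j).1 = x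
  · exact hne ((h.fst_eq_of_lt hji (hfj.trans hfi.symm)).trans hfi)
  have hjx : G.Adj (f j).1 x := hwj ▸ h.adj_of_ne (hwj ▸ Ne.symm hfj)
  have hjK := hG.mem_left_of_adj hxI hjx.symm
  have hwa := hG.eq_of_not_adj ht₀.1 hwK (h.not_adj ((ht₀.2 hjK).trans_lt hji))
  exact hax (by rw [hwa, ← hG.eq_of_not_adj hjK hwK (h.not_adj hji)]; exact hjx)

lemma card_charge_not_mem_le (hG : IsSplitPartition G K I) (h : IsFootprint (XJoin G R) f w)
    {t₀ : ι} (ht₀ : IsLeast {i | (f i).1 ∈ K} t₀)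
    (hα : ∀ i < t₀, ¬ G.Adj (f t₀).1 (f i).1) :
    #{i | ¬(charge I f w i ∈ I ∧ ¬ G.Adj (f t₀).1 (charge I f w i))} ≤ gammaGr (R (f t₀).1) := by
  have hlt : ∀ i, ¬(charge I f w i ∈ I ∧ ¬ G.Adj (f t₀).1 (charge I f w i)) → ¬ i < t₀ := by
    intro i hi hit
    have hfi := hG.fst_mem_of_lt ht₀ hit
    simp only [charge, if_pos hfi] at hi
    exact hα i hit (not_not.mp fun h' => hi ⟨hfi, h'⟩)
  refine h.card_le_gammaGr_factor _ _ fun i hi => ?_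
  rw [mem_filter] at hi
  rcases lt_trichotomy i t₀ with hit | rfl | hit
  · exact absurd hit (hlt i hi.2)
  · exact Or.inr ⟨rfl, fun j hj => not_lt.mp (hlt j (mem_filter.mp hj).2)⟩
  · refine (hG.fst_footprint_eq_or_mem_of_lt h ht₀ hit).imp_right fun hB => absurd ?_ hi.2
    rwa [hG.charge_eq h hB.1]

variable [∀ v, Nonempty (W v)]

/-- `t₀` footprints either a layer `x ∈ I`, extending the plays made in `x` before it, or a layer
`c ∈ K`; then no common neighbour of `(f t₀).1` and `c` in `I` has been played before `t₀`. -/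
lemma exists_card_lt_gammaGr_or_exists_forall_not_adj (hG : IsSplitPartition G K I)
    (h : IsFootprint (XJoin G R) f w) {t₀ : ι} (ht₀ : IsLeast {i | (f i).1 ∈ K} t₀) :
    (∃ x ∈ I, G.Adj (f t₀).1 x ∧ #{i | i < t₀ ∧ (f i).1 = x} < gammaGr (R x)) ∨
      ∃ v ∈ K, ∃ w ∈ K, ∀ x ∈ I, ¬(G.Adj v x ∧ G.Adj w x) := by
  by_cases hwI : (w t₀).1 ∈ I
  · have hne : (w t₀).1 ≠ (f t₀).1 := fun h' => hG.not_mem_right ht₀.1 (h' ▸ hwI)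
    exact Or.inl ⟨_, hwI, h.adj_of_ne hne, h.card_lt_fst_eq_add_one_le rfl hne.symm⟩
  by_cases hn : ∃ x ∈ I, G.Adj (f t₀).1 x ∧ G.Adj (w t₀).1 x
  · obtain ⟨x, hxI, hax, hwx⟩ := hn
    have hm0 : #{i | i < t₀ ∧ (f i).1 = x} = 0 := card_eq_zero.mpr <| filter_eq_empty_iff.mpr
      fun i _ hi => h.not_adj hi.1 (hi.2 ▸ hwx.symm)
    exact Or.inl ⟨x, hxI, hax, hm0 ▸ one_le_gammaGr⟩
  · push Not at hn
    exact Or.inr ⟨_, ht₀.1, _, (hG.mem_or_mem _).resolve_right hwI,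
      fun x hx h' => hn x hx h'.1 h'.2⟩

/-- Once a layer of `I ∩ N(a)` is played before `t₀`, nothing after `t₀` can footprint `a`, so the
plays charged outside `I \ N(a)` are `t₀` and plays before it in the layers of `I ∩ N(a)`. -/
lemma card_charge_not_mem_le_of_adj (hG : IsSplitPartition G K I)
    (h : IsFootprint (XJoin G R) f w) {t₀ : ι} (ht₀ : IsLeast {i | (f i).1 ∈ K} t₀) {p : ι}
    (hp : p < t₀) (hpa : G.Adj (f t₀).1 (f p).1) :
    #{i | ¬(charge I f w i ∈ I ∧ ¬ G.Adj (f t₀).1 (charge I f w i))} ≤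
      ∑ x ∈ I with G.Adj (f t₀).1 x, gammaGr (R x) +
        if ∃ v ∈ K, ∃ w ∈ K, ∀ x ∈ I, ¬(G.Adj v x ∧ G.Adj w x) then 1 else 0 := by
  set a := (f t₀).1
  let m : V → ℕ := fun x => #{i | i < t₀ ∧ (f i).1 = x}
  have hm : ∀ x, m x ≤ gammaGr (R x) := fun x => by
    simpa [m, filter_filter] using h.card_fst_eq_le {i | i < t₀} x
  have hC : #{i | i < t₀ ∧ G.Adj a (f i).1} ≤ ∑ x ∈ I with G.Adj a x, m x := by
    refine card_le_sum_of_card_fiber_le (c := fun i => (f i).1) (fun i hi => ?_)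
      fun x _ => card_le_card fun i hi => ?_
    · simp only [mem_filter, mem_univ, true_and] at hi ⊢
      exact ⟨hG.fst_mem_of_lt ht₀ hi.1, hi.2⟩
    · simp only [mem_filter, mem_univ, true_and] at hi ⊢
      exact ⟨hi.1.1, hi.2⟩
  calc _ ≤ #{i | i < t₀ ∧ G.Adj a (f i).1} + 1 :=
        (card_le_card (hG.charge_not_mem_subset h ht₀ hp hpa)).trans (card_insert_le _ _)
    _ ≤ ∑ x ∈ I with G.Adj a x, m x + 1 := by omega
    _ ≤ _ := by
      rcases hG.exists_card_lt_gammaGr_or_exists_forall_not_adj h ht₀ with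
        ⟨x, hxI, hax, hx⟩ | hn
      · have := sum_lt_sum (s := {x ∈ I | G.Adj a x}) (fun x _ => hm x)
          ⟨x, mem_filter.mpr ⟨hxI, hax⟩, hx⟩
        omega
      · rw [if_pos hn]
        exact Nat.add_le_add_right (sum_le_sum fun x _ => hm x) 1

theorem card_le_max (hG : IsSplitPartition G K I) (h : IsFootprint (XJoin G R) f w) :
    Fintype.card ι ≤
      max ((∑ v ∈ I, gammaGr (R v)) +
          if ∃ v ∈ K, ∃ w ∈ K, ∀ x ∈ I, ¬(G.Adj v x ∧ G.Adj w x) then 1 else 0)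
        (K.sup fun v => gammaGr (R v) + ∑ x ∈ I with ¬ G.Adj v x, gammaGr (R x)) := by
  by_cases hK : ∃ i, (f i).1 ∈ K
  swap
  · push Not at hK
    refine le_max_of_le_left (le_add_right (h.card_le_sum_of_forall_mem fun i => ?_))
    exact (hG.mem_or_mem _).resolve_left (hK i)
  obtain ⟨t₀, ht₀⟩ : ∃ t₀, IsLeast {i | (f i).1 ∈ K} t₀ := by
    obtain ⟨i, hi⟩ := hK
    exact ⟨_, by simpa using isLeast_min' {i | (f i).1 ∈ K} ⟨i, by simpa using hi⟩⟩
  rw [← card_univ, ← card_filter_add_card_filter_not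
    (fun i => charge I f w i ∈ I ∧ ¬ G.Adj (f t₀).1 (charge I f w i))]
  have hB := hG.card_charge_mem_le h ht₀
  by_cases hα : ∀ i < t₀, ¬ G.Adj (f t₀).1 (f i).1
  · refine le_max_of_le_right (le_trans ?_ (le_sup (f := fun v => gammaGr (R v) +
      ∑ x ∈ I with ¬ G.Adj v x, gammaGr (R x)) ht₀.1))
    have := hG.card_charge_not_mem_le h ht₀ hα
    omega
  · push Not at hα
    obtain ⟨p, hp, hpa⟩ := hα
    have := hG.card_charge_not_mem_le_of_adj h ht₀ hp hpa
    rw [← sum_filter_not_add_sum_filter I (G.Adj (f t₀).1 ·)]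
    refine le_max_of_le_left ?_
    omega

end Upper

end IsSplitPartition

end GrundyDom

theorem stmt17_general {V : Type*} [Fintype V] [DecidableEq V] (G : SimpleGraph V) [DecidableRel G.Adj] (K Iv : Finset V)
    (hpart : ∀ v, v ∈ K ∨ v ∈ Iv) (hdisj : Disjoint K Iv)
    (hK : G.IsClique ↑K) (hIv : IsIndep G ↑Iv)
    {W : V → Type*} [∀ v, Fintype (W v)] [∀ v, Nonempty (W v)]
    (R : ∀ v, SimpleGraph (W v)) :
    gammaGr (XJoin G R) =
      max ((∑ v ∈ Iv, gammaGr (R v)) + (if ∃ v ∈ K, ∃ w ∈ K, ∀ x ∈ Iv, ¬(G.Adj v x ∧ G.Adj w x) then 1 else 0))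
        (K.sup fun v =>
          gammaGr (R v) + ∑ x ∈ Iv.filter (fun y => ¬ G.Adj v y), gammaGr (R x)) := by
  have hG : IsSplitPartition G K Iv := ⟨hpart, hdisj, hK, hIv⟩
  refine le_antisymm (gammaGr_le fun S hS => ?_)
    (max_le ?_ (Finset.sup_le fun v hv => hG.gammaGr_add_sum_le hv))
  · obtain ⟨w, hw⟩ := hS.exists_isFootprint
    simpa using hG.card_le_max hw
  · split_ifs with hn
    · obtain ⟨v, hv, w, hw, hvw⟩ := hn
      exact hG.sum_add_one_le hv hw hvw
    · simpa using sum_gammaGr_le_gammaGr_xJoin hIv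

/-- for a split graph `G = (I* ∪ K, E)` with `|I*| = α(G)`,
`γ_gr(G ↩ 𝓡) = max { Σ_{v ∈ I*} γ_gr(G_v) + n(G),
max_{v ∈ K} (γ_gr(G_v) + Σ_{w ∈ I* \\ N(v)} γ_gr(G_w)) }`. -/
theorem stmt17 {V : Type*} [Fintype V] [DecidableEq V] (G : SimpleGraph V) [DecidableRel G.Adj] (K Iv : Finset V)
    (hpart : ∀ v, v ∈ K ∨ v ∈ Iv) (hdisj : Disjoint K Iv)
    (hK : G.IsClique ↑K) (hIv : IsIndep G ↑Iv)
    (hmaxind : ∀ J : Finset V, IsIndep G ↑J → J.card ≤ Iv.card)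
    {W : V → Type*} [∀ v, Fintype (W v)] [∀ v, Nonempty (W v)]
    (R : ∀ v, SimpleGraph (W v)) :
    gammaGr (XJoin G R) =
      max ((∑ v ∈ Iv, gammaGr (R v)) + (if ∃ v ∈ K, ∃ w ∈ K, ∀ x ∈ Iv, ¬(G.Adj v x ∧ G.Adj w x) then 1 else 0))
        (K.sup fun v =>
          gammaGr (R v) + ∑ x ∈ Iv.filter (fun y => ¬ G.Adj v y), gammaGr (R x)) :=
  stmt17_general G K Iv hpart hdisj hK hIv R
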